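/- For a pairing ⟨·,·⟩ into a vector space over a characteristic-0 field satisfying symmetry, scaling, the 2-cocycle relation, one has ⟨1-a, -1⟩ = ⟨a, 1-a⟩ for every a. -/
import Mathlib

theorem bracket_one_minus {k V : Type*} [Field k] [CharZero k] [AddCommGroup V] [Module k V]
    (br : k → k → V)
    (hsymm : ∀ a b, br a b = br b a)
    (hscale : ∀ c a b, br (c * a) (c * b) = c • br a b)
    (hcoc : ∀ a b c, br a (b + c) + br b c = br (a + b) c + br a b) :
    ∀ a : k, br (1 - a) (-1) = br a (1 - a) := by
  intro a
  have h1 : br 1 (-1) = 0 := by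
    have h := hscale (-1) 1 (-1)
    have h' : br (-1) 1 = -br 1 (-1) := by
      simpa [neg_smul] using h
    have h2 : br 1 (-1) = -br 1 (-1) := (hsymm 1 (-1)).trans h'
    have h3 : (2 : k) • br 1 (-1) = 0 := by
      rw [two_smul]
      nth_rewrite 2 [h2]
      simp
    have : (2 : k) ≠ 0 := two_ne_zero
    exact (smul_eq_zero.mp h3).resolve_left this
  have h2 : br a (-a) = 0 := by
    have := hscale a 1 (-1)
    simpa [h1] using this
  have h := hcoc a (1-a) (-1)
  rw [show (1-a) + (-1) = -a by ring, show a + (1-a) = (1:k) by ring, h2] at h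
  simpa [h1] using h
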